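/- Let 0 < q < p ≤ 1 and n ≥ 2, α, β ≥ 0. For all x ∈ [0,1], the second central moment satisfies the bound S_{n,p,q}((t-x)²; x) ≤ (p^{n-1}[n]_{p,q} + β² + 2αβ + α²)/([n]_{p,q} + β)², using q[n]_{p,q}[n-1]_{p,q} ≤ [n]_{p,q}². -/

import Mathlib

open Finset Filter

noncomputable def pqInt (p q : ℝ) (n : ℕ) : ℝ := ∑ i ∈ Finset.range n, p ^ (n - 1 - i) * q ^ i

noncomputable def pqFact (p q : ℝ) (n : ℕ) : ℝ := ∏ j ∈ Finset.range n, pqInt p q (j + 1)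

noncomputable def pqChoose (p q : ℝ) (n k : ℕ) : ℝ :=
  pqFact p q n / (pqFact p q k * pqFact p q (n - k))

noncomputable def pqBasis (p q : ℝ) (n k : ℕ) (x : ℝ) : ℝ :=
  (1 / p ^ (n * (n - 1) / 2)) * pqChoose p q n k * p ^ (k * (k - 1) / 2) * x ^ k *
    ∏ s ∈ Finset.range (n - k), (p ^ s - q ^ s * x)

noncomputable def S (p q α β : ℝ) (n : ℕ) (f : ℝ → ℝ) (x : ℝ) : ℝ :=
  ∑ k ∈ Finset.range (n + 1),
    pqBasis p q n k x * f ((p ^ (n - k) * pqInt p q k + α) / (pqInt p q n + β))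

/-! The basis is a partition of unity (induction on `n` through the `(p,q)`-Pascal rule), and the
absorption identity `[k+1] · C(n+1, k+1) = [n+1] · C(n, k)` lowers the level of the node
moments, giving `∑ b_k m_k = [n] x` and `∑ b_k m_k² = [n] x (p^(n-1) + q [n-1] x)` for the node
numerators `m_k = p^(n-k) [k]`. Expanding the square gives the closed form, whose `x²`
coefficient is at most `β²` because `[n] = p^(n-1) + q [n-1] ≥ q [n-1]`; then `0 ≤ x ≤ 1`. -/

section pqInt

variable {p q : ℝ}

lemma pqInt_zero (p q : ℝ) : pqInt p q 0 = 0 := by simp [pqInt]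

lemma pqInt_one (p q : ℝ) : pqInt p q 1 = 1 := by simp [pqInt]

lemma pqInt_add (p q : ℝ) (m k : ℕ) :
    pqInt p q (m + k) = p ^ k * pqInt p q m + q ^ m * pqInt p q k := by
  simp only [pqInt, sum_range_add, mul_sum]
  congr 1 <;> refine sum_congr rfl fun i hi => ?_ <;> have := mem_range.1 hi
  · rw [show m + k - 1 - i = k + (m - 1 - i) by omega, pow_add]; ring
  · rw [show m + k - 1 - (m + i) = k - 1 - i by omega, pow_add]; ring

lemma pqInt_succ (p q : ℝ) (n : ℕ) : pqInt p q (n + 1) = p ^ n + q * pqInt p q n := by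
  rw [add_comm n, pqInt_add, pqInt_one, mul_one, pow_one]

lemma pqInt_nonneg (hp : 0 ≤ p) (hq : 0 ≤ q) (n : ℕ) : 0 ≤ pqInt p q n :=
  sum_nonneg fun _ _ => by positivity

lemma pqInt_pos (hp : 0 < p) (hq : 0 ≤ q) {n : ℕ} (hn : n ≠ 0) : 0 < pqInt p q n := by
  obtain ⟨m, rfl⟩ := Nat.exists_eq_succ_of_ne_zero hn
  rw [pqInt_succ]
  have := pqInt_nonneg hp.le hq m
  positivity

lemma mul_pqInt_mul_pqInt_pred_le (hp : 0 ≤ p) (hq : 0 ≤ q) (n : ℕ) :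
    q * pqInt p q n * pqInt p q (n - 1) ≤ pqInt p q n ^ 2 := by
  cases n with
  | zero => simp [pqInt_zero]
  | succ n =>
    have hN := pqInt_nonneg hp hq (n + 1)
    have hqN : q * pqInt p q n ≤ pqInt p q (n + 1) := by
      rw [pqInt_succ]; linarith [pow_nonneg hp n]
    rw [Nat.add_sub_cancel, mul_comm q, mul_assoc, sq]
    exact mul_le_mul_of_nonneg_left hqN hN

end pqInt

section pqChoose

variable {p q : ℝ}

lemma pqFact_zero (p q : ℝ) : pqFact p q 0 = 1 := prod_range_zero _

lemma pqFact_succ (p q : ℝ) (n : ℕ) : pqFact p q (n + 1) = pqFact p q n * pqInt p q (n + 1) :=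
  prod_range_succ _ n

lemma pqFact_pos (hp : 0 < p) (hq : 0 ≤ q) (n : ℕ) : 0 < pqFact p q n :=
  prod_pos fun j _ => pqInt_pos hp hq j.succ_ne_zero

lemma pqChoose_zero_right (hp : 0 < p) (hq : 0 ≤ q) (n : ℕ) : pqChoose p q n 0 = 1 := by
  rw [pqChoose, pqFact_zero, one_mul, Nat.sub_zero, div_self (pqFact_pos hp hq n).ne']

lemma pqChoose_self (hp : 0 < p) (hq : 0 ≤ q) (n : ℕ) : pqChoose p q n n = 1 := by
  rw [pqChoose, Nat.sub_self, pqFact_zero, mul_one, div_self (pqFact_pos hp hq n).ne']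

lemma pqChoose_succ_succ (hp : 0 < p) (hq : 0 ≤ q) {n k : ℕ} (hk : k < n) :
    pqChoose p q (n + 1) (k + 1) =
      p ^ (k + 1) * pqChoose p q n (k + 1) + q ^ (n - k) * pqChoose p q n k := by
  obtain ⟨m, rfl⟩ : ∃ m, n = m + k + 1 := ⟨n - k - 1, by omega⟩
  have hsplit := pqInt_add p q (m + 1) (k + 1)
  rw [show m + 1 + (k + 1) = m + k + 1 + 1 by omega] at hsplit
  rw [pqChoose, pqChoose, pqChoose, show m + k + 1 + 1 - (k + 1) = m + 1 by omega,
    show m + k + 1 - (k + 1) = m by omega, show m + k + 1 - k = m + 1 by omega,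
    pqFact_succ p q (m + k + 1), pqFact_succ p q k, pqFact_succ p q m, hsplit]
  have := (pqFact_pos hp hq k).ne'
  have := (pqFact_pos hp hq m).ne'
  have := (pqInt_pos hp hq k.succ_ne_zero).ne'
  have := (pqInt_pos hp hq m.succ_ne_zero).ne'
  field_simp

lemma pqChoose_succ_succ_mul_pqInt (hp : 0 < p) (hq : 0 ≤ q) (n k : ℕ) :
    pqChoose p q (n + 1) (k + 1) * pqInt p q (k + 1) = pqInt p q (n + 1) * pqChoose p q n k := by
  rw [pqChoose, pqChoose, Nat.add_sub_add_right, pqFact_succ p q n, pqFact_succ p q k]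
  have := (pqFact_pos hp hq k).ne'
  have := (pqFact_pos hp hq (n - k)).ne'
  have := (pqInt_pos hp hq k.succ_ne_zero).ne'
  field_simp

end pqChoose

lemma Finset.sum_range_eq_of_pascal {M : Type*} [AddCommMonoid M] {f A B : ℕ → M} {n : ℕ}
    (h0 : f 0 = A 0) (hlast : f (n + 1) = B n) (hstep : ∀ k < n, f (k + 1) = A (k + 1) + B k) :
    ∑ k ∈ range (n + 2), f k = ∑ k ∈ range (n + 1), A k + ∑ k ∈ range (n + 1), B k := by
  rw [sum_range_succ', sum_range_succ, sum_congr rfl fun k hk => hstep k (mem_range.1 hk),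
    sum_add_distrib, sum_range_succ' A, sum_range_succ B, h0, hlast]
  abel

section pqBasis

variable {p q : ℝ}

lemma pqBasis_self (hp : 0 < p) (hq : 0 ≤ q) (n : ℕ) (x : ℝ) : pqBasis p q n n x = x ^ n := by
  have := (pow_pos hp (n * (n - 1) / 2)).ne'
  rw [pqBasis, pqChoose_self hp hq, Nat.sub_self, prod_range_zero]
  field_simp

lemma pqBasis_succ_zero (hp : 0 < p) (hq : 0 ≤ q) (n : ℕ) (x : ℝ) :
    p ^ n * pqBasis p q (n + 1) 0 x = (p ^ n - q ^ n * x) * pqBasis p q n 0 x := by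
  have := (pow_pos hp (n * (n - 1) / 2)).ne'
  have := (pow_pos hp n).ne'
  rw [pqBasis, pqBasis, pqChoose_zero_right hp hq, pqChoose_zero_right hp hq, Nat.triangle_succ,
    Nat.sub_zero, Nat.sub_zero, prod_range_succ, pow_add]
  set P := ∏ s ∈ range n, (p ^ s - q ^ s * x)
  field_simp

lemma pqBasis_succ_succ (hp : 0 < p) (hq : 0 ≤ q) {n k : ℕ} (hk : k < n) (x : ℝ) :
    p ^ n * pqBasis p q (n + 1) (k + 1) x =
      p ^ (k + 1) * (p ^ (n - (k + 1)) - q ^ (n - (k + 1)) * x) * pqBasis p q n (k + 1) x +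
        q ^ (n - k) * p ^ k * x * pqBasis p q n k x := by
  have := (pow_pos hp (n * (n - 1) / 2)).ne'
  have := (pow_pos hp n).ne'
  rw [pqBasis, pqBasis, pqBasis, pqChoose_succ_succ hp hq hk, Nat.triangle_succ,
    Nat.triangle_succ, Nat.add_sub_add_right, show n - k = n - (k + 1) + 1 by omega,
    prod_range_succ, pow_add, pow_add]
  set P := ∏ s ∈ range (n - (k + 1)), (p ^ s - q ^ s * x)
  field_simp
  ring

lemma pqBasis_succ_succ_mul_node (hp : 0 < p) (hq : 0 ≤ q) {n k : ℕ} (hk : k ≤ n) (x : ℝ) :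
    pqBasis p q (n + 1) (k + 1) x * (p ^ (n - k) * pqInt p q (k + 1)) =
      pqInt p q (n + 1) * x * pqBasis p q n k x := by
  obtain ⟨m, rfl⟩ := Nat.exists_eq_add_of_le hk
  have := (pow_pos hp ((k + m) * (k + m - 1) / 2)).ne'
  have := (pow_pos hp k).ne'
  have hC := pqChoose_succ_succ_mul_pqInt hp hq (k + m) k
  rw [pqBasis, pqBasis, Nat.triangle_succ, Nat.triangle_succ, Nat.add_sub_add_right,
    Nat.add_sub_cancel_left, pow_add, pow_add, pow_add, pow_succ x]
  set P := ∏ s ∈ range m, (p ^ s - q ^ s * x)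
  field_simp
  linear_combination (x * x ^ k * P) * hC

lemma sum_pqBasis (hp : 0 < p) (hq : 0 ≤ q) (n : ℕ) (x : ℝ) :
    ∑ k ∈ range (n + 1), pqBasis p q n k x = 1 := by
  induction n with
  | zero => simp [pqBasis_self hp hq]
  | succ n ih =>
    have hpn : p ^ n ≠ 0 := (pow_pos hp n).ne'
    refine mul_left_cancel₀ hpn ?_
    have hsplit := sum_range_eq_of_pascal (f := fun k => p ^ n * pqBasis p q (n + 1) k x)
      (A := fun k => p ^ k * (p ^ (n - k) - q ^ (n - k) * x) * pqBasis p q n k x)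
      (B := fun k => q ^ (n - k) * p ^ k * x * pqBasis p q n k x)
      (by simpa using pqBasis_succ_zero hp hq n x)
      (by simp only [pqBasis_self hp hq, Nat.sub_self]; ring)
      (fun k hk => pqBasis_succ_succ hp hq hk x)
    rw [mul_sum, hsplit, ← sum_add_distrib, mul_one, ← mul_one (p ^ n), ← ih, mul_sum]
    refine sum_congr rfl fun k hk => ?_
    have hpk : p ^ k * p ^ (n - k) = p ^ n := by
      rw [← pow_add, Nat.add_sub_cancel' (Nat.lt_succ_iff.1 (mem_range.1 hk))]
    linear_combination pqBasis p q n k x * hpk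

lemma sum_pqBasis_succ_mul_node_mul (hp : 0 < p) (hq : 0 ≤ q) (n : ℕ) (x : ℝ) (f : ℕ → ℝ) :
    ∑ k ∈ range (n + 2), pqBasis p q (n + 1) k x * (p ^ (n + 1 - k) * pqInt p q k * f k) =
      pqInt p q (n + 1) * x * ∑ k ∈ range (n + 1), pqBasis p q n k x * f (k + 1) := by
  rw [sum_range_succ', pqInt_zero, mul_zero, zero_mul, mul_zero, add_zero, mul_sum]
  refine sum_congr rfl fun k hk => ?_
  have hnode := pqBasis_succ_succ_mul_node hp hq (Nat.lt_succ_iff.1 (mem_range.1 hk)) x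
  rw [Nat.add_sub_add_right]
  linear_combination f (k + 1) * hnode

lemma sum_pqBasis_mul_node (hp : 0 < p) (hq : 0 ≤ q) (n : ℕ) (x : ℝ) :
    ∑ k ∈ range (n + 1), pqBasis p q n k x * (p ^ (n - k) * pqInt p q k) = pqInt p q n * x := by
  cases n with
  | zero => simp [pqInt_zero]
  | succ n =>
    simpa [sum_pqBasis hp hq] using sum_pqBasis_succ_mul_node_mul hp hq n x fun _ => 1

lemma sum_pqBasis_mul_node_sq (hp : 0 < p) (hq : 0 ≤ q) (n : ℕ) (x : ℝ) :
    ∑ k ∈ range (n + 1), pqBasis p q n k x * (p ^ (n - k) * pqInt p q k) ^ 2 =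
      pqInt p q n * x * (p ^ (n - 1) + q * pqInt p q (n - 1) * x) := by
  cases n with
  | zero => simp [pqInt_zero]
  | succ n =>
    have hnext : ∀ k ∈ range (n + 1), pqBasis p q n k x * (p ^ (n + 1 - (k + 1)) * pqInt p q (k + 1))
        = p ^ n * pqBasis p q n k x + q * (pqBasis p q n k x * (p ^ (n - k) * pqInt p q k)) := by
      intro k hk
      have hpk : p ^ (n - k) * p ^ k = p ^ n := by
        rw [← pow_add, Nat.sub_add_cancel (Nat.lt_succ_iff.1 (mem_range.1 hk))]
      rw [Nat.add_sub_add_right, pqInt_succ]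
      linear_combination pqBasis p q n k x * hpk
    simp only [sq]
    rw [show n + 1 + 1 = n + 2 from rfl, sum_pqBasis_succ_mul_node_mul hp hq n x fun k => p ^ (n + 1 - k) * pqInt p q k,
      sum_congr rfl hnext, sum_add_distrib, ← mul_sum, ← mul_sum, sum_pqBasis hp hq,
      sum_pqBasis_mul_node hp hq, Nat.add_sub_cancel]
    ring

end pqBasis

lemma sum_mul_div_sub_sq {ι : Type*} (s : Finset ι) (w m : ι → ℝ) {a D : ℝ} (hD : D ≠ 0)
    (x : ℝ) :
    ∑ i ∈ s, w i * ((m i + a) / D - x) ^ 2 =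
      (∑ i ∈ s, w i * m i ^ 2 + 2 * (a - D * x) * ∑ i ∈ s, w i * m i +
        (a - D * x) ^ 2 * ∑ i ∈ s, w i) / D ^ 2 := by
  have hterm : ∀ i ∈ s, w i * ((m i + a) / D - x) ^ 2 =
      (w i * m i ^ 2 + 2 * (a - D * x) * (w i * m i) + (a - D * x) ^ 2 * w i) / D ^ 2 := by
    intro i _
    field_simp
    ring
  rw [sum_congr rfl hterm, ← sum_div, sum_add_distrib, sum_add_distrib, mul_sum, mul_sum]

lemma S_sub_sq_eq {p q : ℝ} (hp : 0 < p) (hq : 0 ≤ q) (α β : ℝ) {n : ℕ}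
    (hD : pqInt p q n + β ≠ 0) (x : ℝ) :
    S p q α β n (fun t => (t - x) ^ 2) x =
      ((q * pqInt p q n * pqInt p q (n - 1) - pqInt p q n ^ 2 + β ^ 2) * x ^ 2 +
        (p ^ (n - 1) * pqInt p q n - 2 * α * β) * x + α ^ 2) / (pqInt p q n + β) ^ 2 := by
  rw [S, sum_mul_div_sub_sq _ _ _ hD, sum_pqBasis_mul_node_sq hp hq, sum_pqBasis_mul_node hp hq,
    sum_pqBasis hp hq]
  ring

theorem S_second_central_moment_bound_general (p q α β : ℝ) (hq : 0 < q) (hqp : q < p)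
    (hα : 0 ≤ α) (hβ : 0 ≤ β) (n : ℕ) (hn : 2 ≤ n)
    (x : ℝ) (hx : x ∈ Set.Icc (0 : ℝ) 1) :
    S p q α β n (fun t => (t - x) ^ 2) x ≤
      (p ^ (n - 1) * pqInt p q n + β ^ 2 + 2 * α * β + α ^ 2) / (pqInt p q n + β) ^ 2 := by
  obtain ⟨hx0, hx1⟩ := hx
  have hp : 0 < p := hq.trans hqp
  have hN : 0 < pqInt p q n := pqInt_pos hp hq.le (by omega)
  rw [S_sub_sq_eq hp hq.le α β (by positivity) x]
  refine div_le_div_of_nonneg_right ?_ (sq_nonneg _)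
  have hqN := mul_pqInt_mul_pqInt_pred_le hp.le hq.le n
  have hPN : 0 ≤ p ^ (n - 1) * pqInt p q n := by positivity
  nlinarith [mul_nonneg (sub_nonneg.2 hqN) (sq_nonneg x), mul_nonneg hPN (sub_nonneg.2 hx1),
    mul_nonneg (sq_nonneg β) (sub_nonneg.2 (pow_le_one₀ hx0 hx1 : x ^ 2 ≤ 1)),
    mul_nonneg (mul_nonneg hα hβ) hx0]

theorem S_second_central_moment_bound (p q α β : ℝ) (hq : 0 < q) (hqp : q < p) (hp : p ≤ 1)
    (hα : 0 ≤ α) (hβ : 0 ≤ β) (n : ℕ) (hn : 2 ≤ n)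
    (x : ℝ) (hx : x ∈ Set.Icc (0 : ℝ) 1) :
    S p q α β n (fun t => (t - x) ^ 2) x ≤
      (p ^ (n - 1) * pqInt p q n + β ^ 2 + 2 * α * β + α ^ 2) / (pqInt p q n + β) ^ 2 :=
  S_second_central_moment_bound_general p q α β hq hqp hα hβ n hn x hx
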